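/- arXiv:1602.00436 — 2 statements merged into one kernel-verified Lean document; each statement's English description precedes it below -/
import Mathlib

section
/- For all real x with 0 < |x| < π/2, sin x / x < (2 + cos x)/3 < (1/2)·(x/sin x + cos x). -/
/-!
Both inequalities, cleared of denominators, say that a function vanishing at `0` is positive
for `x > 0`: `x (2 + cos x) - 3 sin x` for Cusa's inequality and `3x + sin x cos x - 4 sin x`
for the Neuman–Sándor refinement. The derivative of the latter is `2 (1 - cos x)²`; the
derivative of the former is `2 - 2 cos x - x sin x`, which vanishes at `0` and has derivative
`sin x - x cos x > 0` on `(0, π)`. Beyond `π` crude bounds suffice, and both sides are even in `x`.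
-/

open Real Set

theorem pos_of_hasDerivAt_pos {f f' : ℝ → ℝ} {b x : ℝ} (hf : ∀ y, HasDerivAt f (f' y) y)
    (hf0 : f 0 = 0) (hf' : ∀ y ∈ Ioo 0 b, 0 < f' y) (hx0 : 0 < x) (hxb : x ≤ b) : 0 < f x := by
  have hmono : StrictMonoOn f (Icc 0 b) :=
    strictMonoOn_of_deriv_pos (convex_Icc 0 b)
      (continuous_iff_continuousAt.2 fun y => (hf y).continuousAt).continuousOn
      fun y hy => (hf y).deriv ▸ hf' y (by rwa [interior_Icc] at hy)
  simpa [hf0] using hmono (left_mem_Icc.2 (hx0.le.trans hxb)) ⟨hx0.le, hxb⟩ hx0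

namespace Real

variable {x : ℝ}

theorem mul_cos_lt_sin (h0 : 0 < x) (hπ : x < π) : x * cos x < sin x := by
  rcases lt_or_ge x (π / 2) with hx | hx
  · have hcos : 0 < cos x := cos_pos_of_mem_Ioo ⟨by linarith [pi_pos], hx⟩
    have htan := lt_tan h0 hx
    rwa [tan_eq_sin_div_cos, lt_div_iff₀ hcos] at htan
  · have hcos : cos x ≤ 0 := cos_nonpos_of_pi_div_two_le_of_le hx (by linarith)
    linarith [mul_nonpos_of_nonneg_of_nonpos h0.le hcos, sin_pos_of_pos_of_lt_pi h0 hπ]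

theorem mul_sin_lt_two_sub_two_cos (h0 : 0 < x) (hπ : x ≤ π) : x * sin x < 2 - 2 * cos x := by
  have hderiv (y : ℝ) : HasDerivAt (fun y => 2 - 2 * cos y - y * sin y) (sin y - y * cos y) y :=
    (((hasDerivAt_const y 2).sub ((hasDerivAt_cos y).const_mul 2)).sub
      ((hasDerivAt_id' y).mul (hasDerivAt_sin y))).congr_deriv (by ring)
  linarith [pos_of_hasDerivAt_pos hderiv (by simp)
    (fun y hy => sub_pos.2 (mul_cos_lt_sin hy.1 hy.2)) h0 hπ]

theorem three_mul_sin_lt_mul_two_add_cos (h0 : 0 < x) : 3 * sin x < x * (2 + cos x) := by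
  rcases le_or_gt x π with hπ | hπ
  · have hderiv (y : ℝ) : HasDerivAt (fun y => y * (2 + cos y) - 3 * sin y)
        (2 - 2 * cos y - y * sin y) y :=
      (((hasDerivAt_id' y).mul ((hasDerivAt_cos y).const_add 2)).sub
        ((hasDerivAt_sin y).const_mul 3)).congr_deriv (by ring)
    linarith [pos_of_hasDerivAt_pos hderiv (by simp)
      (fun y hy => sub_pos.2 (mul_sin_lt_two_sub_two_cos hy.1 hy.2.le)) h0 hπ]
  · have : 0 ≤ x * (1 + cos x) := mul_nonneg h0.le (by linarith [neg_one_le_cos x])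
    nlinarith [sin_le_one x, pi_gt_three]

theorem four_mul_sin_lt_three_mul_add_sin_mul_cos (h0 : 0 < x) :
    4 * sin x < 3 * x + sin x * cos x := by
  rcases le_or_gt x π with hπ | hπ
  · have hderiv (y : ℝ) : HasDerivAt (fun y => 3 * y + sin y * cos y - 4 * sin y)
        (2 * (1 - cos y) ^ 2) y :=
      ((((hasDerivAt_id' y).const_mul 3).add ((hasDerivAt_sin y).mul (hasDerivAt_cos y))).sub
        ((hasDerivAt_sin y).const_mul 4)).congr_deriv (by nlinarith [sin_sq_add_cos_sq y])
    have hcos {y : ℝ} (hy : y ∈ Ioo 0 π) : cos y < 1 := by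
      nlinarith [sin_pos_of_pos_of_lt_pi hy.1 hy.2, sin_sq_add_cos_sq y, cos_le_one y]
    linarith [pos_of_hasDerivAt_pos hderiv (by simp)
      (fun y hy => mul_pos two_pos (pow_pos (sub_pos.2 (hcos hy)) 2)) h0 hπ]
  · nlinarith [sq_nonneg (sin x + cos x), sin_sq_add_cos_sq x, sin_le_one x, pi_gt_three]

theorem sin_div_lt_two_add_cos_div_three (hx : x ≠ 0) : sin x / x < (2 + cos x) / 3 := by
  wlog hpos : 0 < x generalizing x
  · have hneg : 0 < -x := neg_pos.2 (lt_of_le_of_ne (not_lt.1 hpos) hx)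
    simpa [neg_div_neg_eq] using this (neg_ne_zero.2 hx) hneg
  rw [div_lt_div_iff₀ hpos three_pos]
  linarith [three_mul_sin_lt_mul_two_add_cos hpos]

theorem two_add_cos_div_three_lt (hx : x ≠ 0) (hπ : |x| < π) :
    (2 + cos x) / 3 < 1 / 2 * (x / sin x + cos x) := by
  wlog hpos : 0 < x generalizing x
  · have hneg : 0 < -x := neg_pos.2 (lt_of_le_of_ne (not_lt.1 hpos) hx)
    simpa [neg_div_neg_eq] using this (neg_ne_zero.2 hx) (by rwa [abs_neg]) hneg
  have hsin : 0 < sin x := sin_pos_of_pos_of_lt_pi hpos (abs_of_pos hpos ▸ hπ)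
  have hrhs : 1 / 2 * (x / sin x + cos x) = (x + sin x * cos x) / (2 * sin x) := by
    field_simp
  rw [hrhs, div_lt_div_iff₀ three_pos (by positivity)]
  linarith [four_mul_sin_lt_three_mul_add_sin_mul_cos hpos]

end Real

theorem stmt_4 (x : ℝ) (h1 : 0 < |x|) (h2 : |x| < π / 2) :
    sin x / x < (2 + cos x) / 3 ∧ (2 + cos x) / 3 < (1 / 2) * (x / sin x + cos x) :=
  ⟨sin_div_lt_two_add_cos_div_three (abs_pos.1 h1),
    two_add_cos_div_three_lt (abs_pos.1 h1) (h2.trans (by linarith [pi_pos]))⟩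
end

section
/- For all real x with 0 < |x| < π/2, ((sin x / x)^2 + (tan x)/x)/2 > (sin x / x)^2 · (tan x / x) > (2·(sin x / x) + (tan x)/x)/3. -/
/-!
After clearing the positive denominator `x³ cos x`, the two inequalities become
`2 sin² x < x² + x sin x cos x` and `x² (1 + 2 cos x) < 3 sin² x` for `0 < x < π / 2`
(both sides are even in `x`). Writing `sin² x = (1 - cos 2x) / 2`, both follow from the
alternating Taylor bounds for `sin` and `cos` on `[0, ∞)`, obtained by integrating
`1 - cos ≥ 0` repeatedly: the Taylor terms up to degree 4 cancel, and the degree-6 term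
dominates the degree-8 error as long as `x²` stays below `7 / 2`, resp. `21 / 4`,
which covers `x² < π² / 4`.
-/

open Real Finset

noncomputable def sinTaylor (n : ℕ) (x : ℝ) : ℝ :=
  ∑ k ∈ range n, (-1) ^ k * x ^ (2 * k + 1) / (2 * k + 1).factorial

noncomputable def cosTaylor (n : ℕ) (x : ℝ) : ℝ :=
  ∑ k ∈ range n, (-1) ^ k * x ^ (2 * k) / (2 * k).factorial

theorem hasDerivAt_sinTaylor (n : ℕ) (x : ℝ) : HasDerivAt (sinTaylor n) (cosTaylor n x) x := by
  refine HasDerivAt.fun_sum fun k _ => ?_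
  refine (((hasDerivAt_pow (2 * k + 1) x).const_mul ((-1 : ℝ) ^ k)).div_const
    ((2 * k + 1).factorial : ℝ)).congr_deriv ?_
  rw [Nat.factorial_succ]
  push_cast
  field_simp

theorem hasDerivAt_cosTaylor_succ (n : ℕ) (x : ℝ) :
    HasDerivAt (cosTaylor (n + 1)) (-sinTaylor n x) x := by
  have h : cosTaylor (n + 1) =
      fun x => ∑ k ∈ range n, (-1 : ℝ) ^ (k + 1) * x ^ (2 * k + 2) / (2 * k + 2).factorial + 1 := by
    funext x
    simp [cosTaylor, sum_range_succ', mul_add]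
  rw [h, sinTaylor, ← sum_neg_distrib]
  refine (HasDerivAt.fun_sum fun k _ => ?_).add_const 1
  refine (((hasDerivAt_pow (2 * k + 2) x).const_mul ((-1 : ℝ) ^ (k + 1))).div_const
    ((2 * k + 2).factorial : ℝ)).congr_deriv ?_
  rw [Nat.factorial_succ]
  push_cast
  field_simp
  ring

theorem nonneg_of_hasDerivAt_of_nonneg {f f' : ℝ → ℝ} (hf : ∀ t, HasDerivAt f (f' t) t)
    (h0 : f 0 = 0) (hf' : ∀ t, 0 ≤ t → 0 ≤ f' t) {x : ℝ} (hx : 0 ≤ x) : 0 ≤ f x := by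
  have hmono : MonotoneOn f (Set.Ici 0) :=
    monotoneOn_of_hasDerivWithinAt_nonneg (convex_Ici 0)
      (fun t _ => (hf t).continuousAt.continuousWithinAt)
      (fun t _ => (hf t).hasDerivWithinAt)
      (fun t ht => hf' t (interior_subset ht))
  simpa [h0] using hmono Set.self_mem_Ici hx hx

theorem neg_one_pow_mul_sinTaylor_sub_sin_nonneg {n : ℕ}
    (hcos : ∀ t, 0 ≤ t → 0 ≤ (-1) ^ n * (cosTaylor (n + 1) t - cos t)) {x : ℝ} (hx : 0 ≤ x) :
    0 ≤ (-1) ^ n * (sinTaylor (n + 1) x - sin x) :=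
  nonneg_of_hasDerivAt_of_nonneg
    (fun t => ((hasDerivAt_sinTaylor _ t).sub (hasDerivAt_sin t)).const_mul _)
    (by simp [sinTaylor]) hcos hx

theorem neg_one_pow_mul_cosTaylor_sub_cos_nonneg (n : ℕ) {x : ℝ} (hx : 0 ≤ x) :
    0 ≤ (-1) ^ n * (cosTaylor (n + 1) x - cos x) := by
  induction n generalizing x with
  | zero => simpa [cosTaylor] using cos_le_one x
  | succ n ih =>
    refine nonneg_of_hasDerivAt_of_nonneg
      (fun t => ((hasDerivAt_cosTaylor_succ _ t).sub (hasDerivAt_cos t)).const_mul _)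
      (by simp [cosTaylor, sum_range_succ']) (fun t ht => ?_) hx
    have := neg_one_pow_mul_sinTaylor_sub_sin_nonneg (fun t ht => ih ht) ht
    linarith [show (-1 : ℝ) ^ (n + 1) * (-sinTaylor (n + 1) t - -sin t) =
      (-1) ^ n * (sinTaylor (n + 1) t - sin t) by ring]

theorem sinTaylor_le_sin (n : ℕ) {x : ℝ} (hx : 0 ≤ x) : sinTaylor (2 * n + 2) x ≤ sin x := by
  have := neg_one_pow_mul_sinTaylor_sub_sin_nonneg
    (fun t ht => neg_one_pow_mul_cosTaylor_sub_cos_nonneg (2 * n + 1) ht) hx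
  simpa [pow_succ, pow_mul] using this

theorem cosTaylor_le_cos (n : ℕ) {x : ℝ} (hx : 0 ≤ x) : cosTaylor (2 * n + 2) x ≤ cos x := by
  simpa [pow_succ, pow_mul] using neg_one_pow_mul_cosTaylor_sub_cos_nonneg (2 * n + 1) hx

theorem cos_le_cosTaylor (n : ℕ) {x : ℝ} (hx : 0 ≤ x) : cos x ≤ cosTaylor (2 * n + 1) x := by
  simpa [pow_mul] using neg_one_pow_mul_cosTaylor_sub_cos_nonneg (2 * n) hx

theorem two_mul_sin_sq_lt {x : ℝ} (hx : 0 < x) (hx' : x ^ 2 < 7 / 2) :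
    2 * sin x ^ 2 < x ^ 2 + x * sin x * cos x := by
  have hy : 0 < 2 * x := by positivity
  have hsin := sinTaylor_le_sin 1 hy.le
  have hcos := cosTaylor_le_cos 1 hy.le
  simp only [sinTaylor, cosTaylor, sum_range_succ, sum_range_zero] at hsin hcos
  norm_num [Nat.factorial] at hsin hcos
  rw [sin_two_mul] at hsin
  rw [cos_two_mul_eq_one_sub] at hcos
  -- the terms up to degree 4 cancel, leaving `(2 x⁶ / 45) (1 - 2 x² / 7)`
  nlinarith [pow_pos hx 6, pow_pos hx 8]

theorem sq_mul_one_add_two_mul_cos_lt {x : ℝ} (hx : 0 < x) (hx' : x ^ 2 < 21 / 4) :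
    x ^ 2 * (1 + 2 * cos x) < 3 * sin x ^ 2 := by
  have hcos₂ := cos_le_cosTaylor 2 (by positivity : 0 ≤ 2 * x)
  have hcos := cos_le_cosTaylor 1 hx.le
  simp only [cosTaylor, sum_range_succ, sum_range_zero] at hcos₂ hcos
  norm_num [Nat.factorial] at hcos₂ hcos
  rw [cos_two_mul_eq_one_sub] at hcos₂
  -- the terms up to degree 4 cancel, leaving `(x⁶ / 20) (1 - 4 x² / 21)`
  nlinarith [pow_pos hx 6, pow_pos hx 8]

theorem sin_div_sq_mul_tan_div_lt {x : ℝ} (hx : 0 < x) (hx' : x < π / 2) :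
    (sin x / x) ^ 2 * (tan x / x) < ((sin x / x) ^ 2 + tan x / x) / 2 := by
  have hcos : 0 < cos x := cos_pos_of_mem_Ioo ⟨by linarith [pi_pos], hx'⟩
  have hsin : 0 < sin x := sin_pos_of_pos_of_lt_pi hx (by linarith [pi_pos])
  have hx2 : x ^ 2 < 7 / 2 := by nlinarith [pi_lt_d2]
  have key : ((sin x / x) ^ 2 + tan x / x) / 2 - (sin x / x) ^ 2 * (tan x / x) =
      sin x / (2 * x ^ 3 * cos x) * (x ^ 2 + x * sin x * cos x - 2 * sin x ^ 2) := by
    rw [tan_eq_sin_div_cos]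
    field_simp
    ring
  rw [← sub_pos, key]
  exact mul_pos (by positivity) (sub_pos.2 (two_mul_sin_sq_lt hx hx2))

theorem lt_sin_div_sq_mul_tan_div {x : ℝ} (hx : 0 < x) (hx' : x < π / 2) :
    (2 * (sin x / x) + tan x / x) / 3 < (sin x / x) ^ 2 * (tan x / x) := by
  have hcos : 0 < cos x := cos_pos_of_mem_Ioo ⟨by linarith [pi_pos], hx'⟩
  have hsin : 0 < sin x := sin_pos_of_pos_of_lt_pi hx (by linarith [pi_pos])
  have hx2 : x ^ 2 < 21 / 4 := by nlinarith [pi_lt_d2]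
  have key : (sin x / x) ^ 2 * (tan x / x) - (2 * (sin x / x) + tan x / x) / 3 =
      sin x / (3 * x ^ 3 * cos x) * (3 * sin x ^ 2 - x ^ 2 * (1 + 2 * cos x)) := by
    rw [tan_eq_sin_div_cos]
    field_simp
    ring
  rw [← sub_pos, key]
  exact mul_pos (by positivity) (sub_pos.2 (sq_mul_one_add_two_mul_cos_lt hx hx2))

theorem sin_abs_div_abs (x : ℝ) : sin |x| / |x| = sin x / x := by
  rcases abs_cases x with ⟨h, -⟩ | ⟨h, -⟩ <;> simp [h, neg_div_neg_eq]

theorem tan_abs_div_abs (x : ℝ) : tan |x| / |x| = tan x / x := by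
  rcases abs_cases x with ⟨h, -⟩ | ⟨h, -⟩ <;> simp [h, neg_div_neg_eq]

theorem stmt_6 (x : ℝ) (h1 : 0 < |x|) (h2 : |x| < π / 2) :
    ((sin x / x) ^ 2 + tan x / x) / 2 > (sin x / x) ^ 2 * (tan x / x) ∧
      (sin x / x) ^ 2 * (tan x / x) > (2 * (sin x / x) + tan x / x) / 3 := by
  rw [← sin_abs_div_abs, ← tan_abs_div_abs]
  exact ⟨sin_div_sq_mul_tan_div_lt h1 h2, lt_sin_div_sq_mul_tan_div h1 h2⟩
end
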